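/- Let n ≥ 2 be an integer, x₀ > 0, q > 1, and let λ₀ be the smallest λ > 0 satisfying h_q(λ) = 1. Set n₀ := min(n, ⌊x₀⌋) and a := (n!/n₀!) x₀^{n₀}. If T > 0 satisfies T < 1/(e λ₀ a) and T < −(1/λ₀) log( 1 − (n₀!/n!)^{2q} (x₀ + 1)^{−2(n₀+1)q} ), then the initial value problem x'(t) = x(t)^n on [0,T] with x(0) = x₀ has a classical solution x ∈ C¹([0,T], ℝ). -/
import Mathlib


/-- `h_q(λ) := λ e^{−λ/e} (√(4 + e^{−2λ/e}) − e^{−λ/e})^{1/q} / (2^{1/q}(1 − e^{−λ/e})^{1/(2q)})`. -/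
noncomputable def hFun (q lam : ℝ) : ℝ :=
  lam * Real.exp (-(lam / Real.exp 1)) *
    ((Real.sqrt (4 + Real.exp (-(2 * lam / Real.exp 1))) - Real.exp (-(lam / Real.exp 1))) ^ (1 / q)
      / ((2:ℝ) ^ (1 / q) * (1 - Real.exp (-(lam / Real.exp 1))) ^ (1 / (2 * q))))

set_option maxHeartbeats 1000000

lemma hFun_lt_one {q lam : ℝ} (hq : 1 < q) (h0 : 0 < lam) (h1 : lam ≤ (Real.exp 1)⁻¹) :
    hFun q lam < 1 := by
  have hE : (2.718 : ℝ) < Real.exp 1 := by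
    have := Real.exp_one_gt_d9; linarith
  have hEpos : (0:ℝ) < Real.exp 1 := Real.exp_pos 1
  set E := Real.exp 1 with hEdef
  have hlam1 : lam < 1 := lt_of_le_of_lt h1 (by rw [inv_lt_one_iff₀]; right; linarith)
  set xv := lam / E with hxv
  have hxpos : 0 < xv := div_pos h0 hEpos
  have hxle : xv ≤ 0.1354 := by
    have h2 : lam ≤ 1/E := by rw [one_div]; exact h1
    have : xv ≤ 1 / E ^ 2 := by
      rw [hxv, div_le_div_iff₀ hEpos (by positivity)]
      have : (1/E) * E ^ 2 = E := by field_simp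
      nlinarith
    calc xv ≤ 1 / E ^ 2 := this
      _ ≤ 0.1354 := by rw [div_le_iff₀ (by positivity)]; nlinarith
  set u := Real.exp (-xv) with hu
  have hu0 : 0 < u := Real.exp_pos _
  have hu1 : u < 1 := by
    rw [hu, Real.exp_lt_one_iff]; linarith
  have hulb : (0.856 : ℝ) ≤ u := by
    have := Real.add_one_le_exp (-xv)
    linarith
  have h1u_lb : xv ≤ (1 + xv) * (1 - u) := by
    have hex : 1 + xv ≤ Real.exp xv := by linarith [Real.add_one_le_exp xv]
    have hinv : u ≤ (1 + xv)⁻¹ := by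
      rw [hu, Real.exp_neg]
      exact inv_anti₀ (by linarith) hex
    have h2 : (1 + xv) * u ≤ 1 := by
      calc (1 + xv) * u ≤ (1 + xv) * (1 + xv)⁻¹ := by nlinarith
        _ = 1 := by field_simp
    nlinarith
  have h1u_pos : 0 < 1 - u := by linarith
  set s := Real.sqrt (4 + u^2) with hs
  have hs2 : (2:ℝ) ≤ s := by
    rw [hs, show (2:ℝ) = Real.sqrt 4 by rw [show (4:ℝ) = 2^2 by norm_num, Real.sqrt_sq (by norm_num)]]
    exact Real.sqrt_le_sqrt (by nlinarith)
  have hsu_pos : 0 < s - u := by linarith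
  have hs_le : s ≤ u + 1.32 := by
    rw [hs, show u + 1.32 = Real.sqrt ((u+1.32)^2) by rw [Real.sqrt_sq (by linarith)]]
    exact Real.sqrt_le_sqrt (by nlinarith)
  have hq0 : (0:ℝ) < q := by linarith
  set D := (s - u)^2 / (4 * (1 - u)) with hD
  have hDpos : 0 < D := by positivity
  -- rewrite hFun
  have hexp2 : Real.exp (-(2 * lam / E)) = u^2 := by
    rw [show -(2*lam/E) = (-xv) + (-xv) by rw [hxv]; ring, Real.exp_add, hu, sq]
  have hrw1 : (((s-u)^2 : ℝ))^((1:ℝ)/(2*q)) = (s-u)^((1:ℝ)/q) := by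
    rw [← Real.rpow_natCast (s-u) 2, ← Real.rpow_mul hsu_pos.le,
      show ((2:ℕ):ℝ)*((1:ℝ)/(2*q)) = 1/q by push_cast; field_simp]
  have hrw2 : ((4:ℝ))^((1:ℝ)/(2*q)) = (2:ℝ)^((1:ℝ)/q) := by
    rw [show (4:ℝ) = 2^(2:ℕ) by norm_num, ← Real.rpow_natCast 2 2,
      ← Real.rpow_mul (by norm_num),
      show ((2:ℕ):ℝ)*((1:ℝ)/(2*q)) = 1/q by push_cast; field_simp]
  have hrwD : D^((1:ℝ)/(2*q)) = (s-u)^((1:ℝ)/q) / ((2:ℝ)^((1:ℝ)/q) * (1-u)^((1:ℝ)/(2*q))) := by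
    rw [hD, Real.div_rpow (by positivity) (by positivity),
      Real.mul_rpow (by norm_num) h1u_pos.le, hrw1, hrw2]
  have key : hFun q lam = lam * u * D^((1:ℝ)/(2*q)) := by
    unfold hFun
    rw [← hEdef, ← hxv, hexp2, ← hu, ← hs, hrwD]
  have hlamx : lam = xv * E := by rw [hxv]; field_simp
  clear_value D s u xv E
  clear hrw1 hrw2 hrwD hexp2 hs hu hxv hEdef
  -- numeric estimate
  have hlamE : lam * E ≤ 1 := by
    calc lam * E ≤ E⁻¹ * E := by nlinarith
      _ = 1 := by field_simp
  have hlamsq : lam^2 ≤ xv := by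
    have h6 : lam^2 = xv*(lam*E) := by rw [hlamx]; ring
    have h7 := mul_le_mul_of_nonneg_left hlamE hxpos.le
    linarith
  have hsub : (s-u)^2 ≤ 1.7424 := by nlinarith [hs_le, hsu_pos]
  have hw : xv ≤ 1.1354 * (1-u) := by nlinarith [h1u_lb, hxle, h1u_pos]
  have hnum : lam^2 * (s-u)^2 < 4 * (1-u) := by
    have h8 := mul_le_mul hlamsq hsub (sq_nonneg (s-u)) hxpos.le
    linarith
  have hED : lam^((2:ℝ)*q) * D < 1 := by
    have h2q : lam^((2:ℝ)*q) ≤ lam^((2:ℝ)) := by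
      apply Real.rpow_le_rpow_of_exponent_ge h0 hlam1.le
      nlinarith
    have hlam2 : lam^((2:ℝ)) = lam^2 := by
      rw [show ((2:ℝ)) = ((2:ℕ):ℝ) by norm_num, Real.rpow_natCast]
    have hD1 : lam^2 * D < 1 := by
      rw [hD]
      rw [show lam^2 * ((s-u)^2 / (4*(1-u))) = (lam^2*(s-u)^2)/(4*(1-u)) by ring]
      rw [div_lt_one (by linarith)]
      exact hnum
    have h9 := mul_le_mul_of_nonneg_right (hlam2 ▸ h2q) hDpos.le
    linarith
  -- conclude
  rw [key]
  have hstep : lam * u * D^((1:ℝ)/(2*q)) ≤ lam * D^((1:ℝ)/(2*q)) := by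
    exact mul_le_mul_of_nonneg_right (mul_le_of_le_one_right h0.le hu1.le)
      (Real.rpow_nonneg hDpos.le _)
  have heq : lam * D^((1:ℝ)/(2*q)) = (lam^((2:ℝ)*q) * D)^((1:ℝ)/(2*q)) := by
    have h5 : (lam^((2:ℝ)*q))^((1:ℝ)/(2*q)) = lam := by
      rw [← Real.rpow_mul h0.le, show ((2:ℝ)*q)*((1:ℝ)/(2*q)) = 1 by field_simp,
        Real.rpow_one]
    rw [Real.mul_rpow (Real.rpow_nonneg h0.le _) hDpos.le, h5]
  calc lam * u * D^((1:ℝ)/(2*q)) ≤ lam * D^((1:ℝ)/(2*q)) := hstep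
    _ = (lam^((2:ℝ)*q) * D)^((1:ℝ)/(2*q)) := heq
    _ < 1 := by
        apply Real.rpow_lt_one (by positivity) hED (by positivity)


lemma fact_aux (x₀ : ℝ) (hx : 0 ≤ x₀) (n₀ : ℕ) (hx1 : x₀ ≤ n₀ + 1) :
    ∀ m, n₀ ≤ m → x₀ ^ (m - n₀) * (Nat.factorial n₀ : ℝ) ≤ (Nat.factorial m : ℝ) := by
  intro m
  induction m with
  | zero =>
    intro h
    have : n₀ = 0 := by omega
    subst this
    simp [Nat.factorial]
  | succ m ih =>
    intro h
    rcases Nat.lt_or_ge m n₀ with h2 | h2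
    · have : n₀ = m + 1 := by omega
      subst this
      simp
    · have hm := ih h2
      have hstep : (m + 1) - n₀ = (m - n₀) + 1 := by omega
      rw [hstep, pow_succ]
      have hcast : ((m+1).factorial : ℝ) = ((m:ℝ)+1) * (m.factorial : ℝ) := by
        rw [Nat.factorial_succ]; push_cast; ring
      rw [hcast]
      have hxm : x₀ ≤ (m:ℝ) + 1 := by
        have : (n₀:ℝ) ≤ (m:ℝ) := by exact_mod_cast h2
        linarith
      have h3 := mul_le_mul_of_nonneg_left hm hx
      have h4 : (0:ℝ) ≤ (m.factorial : ℝ) := by positivity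
      nlinarith [mul_le_mul_of_nonneg_right hxm h4, pow_nonneg hx (m - n₀),
        (Nat.cast_pos (α := ℝ)).mpr (Nat.factorial_pos n₀)]


/-- Monomial nonlinearity: with `λ₀` the smallest positive root of
`h_q(λ) = 1`, `n₀ := min(n, ⌊x₀⌋)` and `a := (n!/n₀!) x₀^{n₀}`, if `T < 1/(e λ₀ a)` and
`T < −(1/λ₀) log(1 − (n₀!/n!)^{2q} (x₀+1)^{−2(n₀+1)q})`, then `x' = x^n`, `x(0) = x₀`
has a classical solution on `[0,T]`. -/
theorem stmt_15 (n : ℕ) (hn : 2 ≤ n) (x₀ : ℝ) (hx : 0 < x₀) (q : ℝ) (hq : 1 < q)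
    (lam0 : ℝ) (hlam0 : IsLeast {lam : ℝ | 0 < lam ∧ hFun q lam = 1} lam0)
    (T : ℝ) (hT : 0 < T)
    (hT1 : T < 1 / (Real.exp 1 * lam0 *
      ((Nat.factorial n : ℝ) / (Nat.factorial (min n ⌊x₀⌋₊) : ℝ) * x₀ ^ (min n ⌊x₀⌋₊))))
    (hT2 : T < -(1 / lam0) * Real.log (1 -
      ((Nat.factorial (min n ⌊x₀⌋₊) : ℝ) / (Nat.factorial n : ℝ)) ^ (2 * q) *
        (x₀ + 1) ^ (-(2 * ((min n ⌊x₀⌋₊ : ℝ) + 1) * q)))) :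
    ∃ x : ℝ → ℝ, ContDiffOn ℝ 1 x (Set.Icc 0 T) ∧ x 0 = x₀ ∧
      ∀ t ∈ Set.Icc (0:ℝ) T, HasDerivWithinAt x (x t ^ n) (Set.Icc 0 T) t := by
  clear hT2
  have hE : (0:ℝ) < Real.exp 1 := Real.exp_pos 1
  set n₀ := min n ⌊x₀⌋₊ with hn₀
  have hlampos : 0 < lam0 := hlam0.1.1
  have hlamroot : hFun q lam0 = 1 := hlam0.1.2
  have hlamge : (Real.exp 1)⁻¹ ≤ lam0 := by
    by_contra hcon
    push_neg at hcon
    exact absurd hlamroot (ne_of_lt (hFun_lt_one hq hlampos hcon.le))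
  set a : ℝ := (Nat.factorial n : ℝ) / (Nat.factorial n₀ : ℝ) * x₀ ^ n₀ with ha
  have hapos : 0 < a := by positivity
  set m := n - 1 with hm
  have hnm : n = m + 1 := by omega
  have hm1 : 1 ≤ m := by omega
  have hK : (m:ℝ) * x₀ ^ m ≤ a := by
    rcases lt_or_ge x₀ 1 with hlt | hge
    · have h0 : ⌊x₀⌋₊ = 0 := Nat.floor_eq_zero.mpr hlt
      have hn0 : n₀ = 0 := by rw [hn₀, h0]; omega
      have haeq : a = (Nat.factorial n : ℝ) := by
        rw [ha, hn0]; simp [Nat.factorial]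
      rw [haeq]
      have hp : x₀ ^ m ≤ 1 := pow_le_one₀ hx.le hlt.le
      have hmn : (m:ℝ) ≤ (Nat.factorial n : ℝ) := by
        have h5 : m ≤ Nat.factorial n := le_trans (by omega) (Nat.self_le_factorial n)
        exact_mod_cast h5
      nlinarith [pow_nonneg hx.le m, Nat.cast_nonneg (α := ℝ) m]
    · rcases le_or_gt n ⌊x₀⌋₊ with hge2 | hlt2
      · have hn₀n : n₀ = n := by rw [hn₀]; omega
        have hxn : (n:ℝ) ≤ x₀ := by
          calc (n:ℝ) ≤ (⌊x₀⌋₊ : ℝ) := by exact_mod_cast hge2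
            _ ≤ x₀ := Nat.floor_le hx.le
        have haeq : a = x₀ ^ n := by
          rw [ha, hn₀n, div_self (by positivity), one_mul]
        rw [haeq, hnm, pow_succ]
        have hmx : (m:ℝ) ≤ x₀ := by
          have : (m:ℝ) ≤ (n:ℝ) := by exact_mod_cast Nat.sub_le n 1
          linarith
        nlinarith [pow_pos hx m]
      · have hn₀f : n₀ = ⌊x₀⌋₊ := by rw [hn₀]; omega
        have hxub : x₀ < (n₀:ℝ) + 1 := by
          rw [hn₀f]; exact Nat.lt_floor_add_one x₀
        have hn₀m : n₀ ≤ m := by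
          have : ⌊x₀⌋₊ < n := hlt2
          omega
        have hfa := fact_aux x₀ hx.le n₀ hxub.le m hn₀m
        have hsplit : x₀ ^ m = x₀ ^ (m - n₀) * x₀ ^ n₀ := by
          rw [← pow_add]; congr 1; omega
        rw [ha, div_mul_eq_mul_div, le_div_iff₀ (by positivity)]
        have hnf : (Nat.factorial n : ℝ) = ((m:ℝ) + 1) * (Nat.factorial m : ℝ) := by
          rw [hnm, Nat.factorial_succ]; push_cast; ring
        rw [hsplit, hnf]
        have h6 := mul_le_mul_of_nonneg_left hfa (Nat.cast_nonneg (α := ℝ) m)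
        have h7 : (0:ℝ) ≤ x₀ ^ n₀ := by positivity
        have h8 : (0:ℝ) ≤ (Nat.factorial m : ℝ) := by positivity
        nlinarith [mul_le_mul_of_nonneg_right h6 h7,
          mul_nonneg h8 h7]
  have hTprod : T * (Real.exp 1 * lam0 * a) < 1 := by
    have hden : 0 < Real.exp 1 * lam0 * a := by positivity
    rw [lt_div_iff₀ hden] at hT1
    exact hT1
  have hmT : (m:ℝ) * T * x₀ ^ m < 1 := by
    have h2 : (1:ℝ) ≤ Real.exp 1 * lam0 := by
      calc (1:ℝ) = Real.exp 1 * (Real.exp 1)⁻¹ := by field_simp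
        _ ≤ Real.exp 1 * lam0 := by nlinarith
    have h3 : (m:ℝ) * x₀ ^ m ≤ Real.exp 1 * lam0 * a := by nlinarith
    nlinarith [mul_le_mul_of_nonneg_left h3 hT.le]
  -- construct solution
  have hxm : 0 < x₀ ^ m := pow_pos hx m
  set b := (x₀ ^ m)⁻¹ with hb
  have hbpos : 0 < b := by positivity
  have hTb : (m:ℝ) * T < b := by
    have h9 : (m:ℝ) * T < 1 / x₀ ^ m := (lt_div_iff₀ hxm).mpr hmT
    simpa [hb, one_div] using h9
  set c : ℝ → ℝ := fun t => b - (m:ℝ) * t with hc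
  have hcpos : ∀ t ∈ Set.Icc (0:ℝ) T, 0 < c t := by
    rintro t ⟨ht0, ht1⟩
    have h10 : (m:ℝ) * t ≤ (m:ℝ) * T :=
      mul_le_mul_of_nonneg_left ht1 (Nat.cast_nonneg m)
    simp only [hc]
    linarith
  have hmne : ((m:ℝ)) ≠ 0 := by
    have : 0 < (m:ℝ) := by exact_mod_cast hm1
    linarith
  set p : ℝ := -(1/(m:ℝ)) with hp
  refine ⟨fun t => (c t) ^ p, ?_, ?_, ?_⟩
  · intro t ht
    have hct := hcpos t ht
    have hcd : ContDiffAt ℝ 1 c t := by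
      apply ContDiffAt.sub contDiffAt_const
      exact (contDiffAt_id.const_smul ((m:ℝ))).congr_of_eventuallyEq (by
        filter_upwards with y; simp [smul_eq_mul])
    exact (hcd.rpow_const_of_ne (ne_of_gt hct)).contDiffWithinAt
  · show (c 0) ^ p = x₀
    have hc0 : c 0 = b := by simp [hc]
    rw [hc0, hb, Real.inv_rpow (by positivity), ← Real.rpow_natCast x₀ m,
      ← Real.rpow_mul hx.le, hp]
    rw [show (m:ℝ) * (-(1/(m:ℝ))) = -1 by field_simp]
    rw [Real.rpow_neg_one, inv_inv]
  · intro t ht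
    have hct := hcpos t ht
    have hderiv_c : HasDerivAt c (-(m:ℝ)) t := by
      have h11 : HasDerivAt (fun y : ℝ => (m:ℝ) * y) ((m:ℝ)) t := by
        simpa using (hasDerivAt_id t).const_mul ((m:ℝ))
      simpa [hc] using h11.const_sub b
    have hd := hderiv_c.rpow_const (p := p) (Or.inl (ne_of_gt hct))
    have h12 : (-(m:ℝ)) * p * (c t) ^ (p - 1) = (c t) ^ (p - 1) := by
      rw [hp]; field_simp
    have heq2 : ((c t) ^ p) ^ n = (c t) ^ (p - 1) := by
      rw [← Real.rpow_natCast ((c t) ^ p) n, ← Real.rpow_mul hct.le]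
      congr 1
      rw [hp, hnm]
      push_cast
      field_simp
      ring
    rw [show ((fun t => (c t) ^ p) t) ^ n = (c t) ^ (p - 1) from heq2]
    exact (h12 ▸ hd).hasDerivWithinAt
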